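/- arXiv:1804.03025 — 2 statements merged into one kernel-verified Lean document; each statement's English description precedes it below -/
import Mathlib

section
/- Let C(k,j) denote the sum of signs over all (k−j, j−1)-unshuffles in S_{k−1}. Then for integers p > q ≥ 0, one has C(2p, 2q+1) = binomial(p−1, q). -/
open scoped Classical

/-- Sum of the signs of all permutations of `Fin n` that are strictly increasing
on the first `m` positions and on the remaining `n - m` positions.
For `n = k - 1` and `m = k - j` these are the `(k-j, j-1)`-unshuffles. -/
noncomputable def unshuffleSignSum (n m : ℕ) : ℤ :=
  ∑ σ : Equiv.Perm (Fin n),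
    if ((∀ i j : Fin n, i < j → (j : ℕ) < m → σ i < σ j) ∧
        (∀ i j : Fin n, i < j → m ≤ (i : ℕ) → σ i < σ j)) then
      (Equiv.Perm.sign σ : ℤ) else 0

/-!
An unshuffle `σ` of `Fin (n + 1)` with blocks `[0, m)` and `[m, n]` increases on each block, so
the position `σ⁻¹ 0` of the minimum starts a block: it is `0` or `m`. Deleting it leaves an
unshuffle of `Fin n` with boundary `m - 1`, resp. `m`; in the second case this costs the sign
`(-1) ^ m` of `Fin.cycleRange m`. So `S(n, m) := unshuffleSignSum n m` satisfies
`S(n + 1, m) = S(n, m - 1) + (-1) ^ m * S(n, m)`, the `q = -1` case of the `q`-Pascal rule, and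
`S(n, m)` is the Gaussian binomial `[n, m]_q` at `q = -1`: zero for `n` even and `m` odd, and
`(n / 2).choose (m / 2)` otherwise. For `n = 2p - 1`, `m = 2(p - 1 - q) + 1` this is
`(p - 1).choose q`.
-/

namespace Unshuffle

open Equiv Finset

variable {n : ℕ}

def IsUnshuffle (m : ℕ) (σ : Perm (Fin n)) : Prop :=
  StrictMonoOn σ {i | (i : ℕ) < m} ∧ StrictMonoOn σ {i | m ≤ (i : ℕ)}

noncomputable def unshuffleSign (m : ℕ) (σ : Perm (Fin n)) : ℤ :=
  if IsUnshuffle m σ then (Perm.sign σ : ℤ) else 0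

theorem unshuffleSignSum_eq_sum_unshuffleSign (n m : ℕ) :
    unshuffleSignSum n m = ∑ σ : Perm (Fin n), unshuffleSign m σ := by
  refine sum_congr rfl fun σ _ => if_congr ?_ rfl rfl
  refine and_congr ⟨fun h i hi j hj hij => h i j hij hj, fun h i j hij hj => h ?_ hj hij⟩
    ⟨fun h i hi j _ hij => h i j hij hi, fun h i j hij hi => h hi ?_ hij⟩
  · exact lt_trans (Fin.lt_def.1 hij) hj
  · exact le_trans hi (Fin.le_def.1 hij.le)

theorem isUnshuffle_iff_eq_one {m : ℕ} (hm : m = 0 ∨ n ≤ m) {σ : Perm (Fin n)} :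
    IsUnshuffle m σ ↔ σ = 1 := by
  refine ⟨fun hσ => ?_, ?_⟩
  · have : StrictMono σ := by
      rcases hm with rfl | hm
      · simpa using hσ.2
      · simpa [fun i : Fin n => lt_of_lt_of_le i.isLt hm] using hσ.1
    exact Equiv.ext fun i => this.apply_eq
  · rintro rfl
    exact ⟨strictMono_id.strictMonoOn _, strictMono_id.strictMonoOn _⟩

theorem unshuffleSignSum_eq_one {m : ℕ} (hm : m = 0 ∨ n ≤ m) : unshuffleSignSum n m = 1 := by
  simp [unshuffleSignSum_eq_sum_unshuffleSign, unshuffleSign, isUnshuffle_iff_eq_one hm]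

def insertZero (p : Fin (n + 1)) (e : Perm (Fin n)) : Perm (Fin (n + 1)) :=
  Perm.decomposeFin.symm (0, e) * p.cycleRange

@[simp]
theorem insertZero_apply_self (p : Fin (n + 1)) (e : Perm (Fin n)) : insertZero p e p = 0 := by
  simp [insertZero]

@[simp]
theorem insertZero_apply_succAbove (p : Fin (n + 1)) (e : Perm (Fin n)) (j : Fin n) :
    insertZero p e (p.succAbove j) = (e j).succ := by
  simp [insertZero]

theorem sign_insertZero (p : Fin (n + 1)) (e : Perm (Fin n)) :
    Perm.sign (insertZero p e) = (-1) ^ (p : ℕ) * Perm.sign e := by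
  simp [insertZero, Fin.sign_cycleRange, mul_comm]

theorem sum_filter_apply_eq_zero {M : Type*} [AddCommMonoid M] (p : Fin (n + 1))
    (f : Perm (Fin (n + 1)) → M) :
    ∑ σ with σ p = 0, f σ = ∑ e, f (insertZero p e) := by
  refine (sum_nbij' (insertZero p) (fun σ => (Perm.decomposeFin (σ * p.cycleRange⁻¹)).2)
    (by simp) (by simp) (by simp [insertZero]) (fun σ hσ => ?_) (fun _ _ => rfl)).symm
  set τ := σ * p.cycleRange⁻¹
  have hτ : (Perm.decomposeFin τ).1 = 0 := by
    have h := Perm.decomposeFin_symm_apply_zero (Perm.decomposeFin τ).1 (Perm.decomposeFin τ).2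
    rw [Prod.mk.eta, Equiv.symm_apply_apply] at h
    rw [← h]
    simpa [τ, Perm.inv_def] using hσ
  rw [insertZero, ← hτ, Prod.mk.eta, Equiv.symm_apply_apply, inv_mul_cancel_right]

theorem strictMonoOn_insertZero_iff (p : Fin (n + 1)) (e : Perm (Fin n)) {S : Set (Fin (n + 1))}
    (hS : p ∈ S → ∀ i ∈ S, p ≤ i) :
    StrictMonoOn (insertZero p e) S ↔ StrictMonoOn e (p.succAbove ⁻¹' S) := by
  refine ⟨fun h i hi j hj hij => ?_, fun h a ha b hb hab => ?_⟩
  · simpa using h hi hj (Fin.strictMono_succAbove p hij)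
  · have hbp : b ≠ p := by
      rintro rfl
      exact (hS hb a ha).not_gt hab
    obtain ⟨j, rfl⟩ := Fin.exists_succAbove_eq hbp
    by_cases hap : a = p
    · simp [hap, Fin.succ_pos]
    obtain ⟨i, rfl⟩ := Fin.exists_succAbove_eq hap
    simpa using h ha hb (Fin.succAbove_lt_succAbove_iff.1 hab)

theorem isUnshuffle_insertZero_zero (m : ℕ) (e : Perm (Fin n)) :
    IsUnshuffle m (insertZero 0 e) ↔ IsUnshuffle (m - 1) e := by
  have hS : ∀ S : Set (Fin (n + 1)), (0 : Fin (n + 1)) ∈ S → ∀ i ∈ S, 0 ≤ i :=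
    fun _ _ i _ => Fin.zero_le i
  rw [IsUnshuffle, IsUnshuffle, strictMonoOn_insertZero_iff _ _ (hS _),
    strictMonoOn_insertZero_iff _ _ (hS _)]
  congr! 2 <;> ext j <;> simp [Nat.lt_sub_iff_add_lt]

theorem isUnshuffle_insertZero_self (p : Fin (n + 1)) (e : Perm (Fin n)) :
    IsUnshuffle p (insertZero p e) ↔ IsUnshuffle p e := by
  rw [IsUnshuffle, IsUnshuffle,
    strictMonoOn_insertZero_iff _ _ (S := {i | (i : ℕ) < p})
      fun h => absurd h (lt_irrefl (p : ℕ)),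
    strictMonoOn_insertZero_iff _ _ (S := {i | (p : ℕ) ≤ i}) fun _ _ => id]
  have hlt (j : Fin n) : p.succAbove j < p ↔ j.castSucc < p :=
    Fin.succAbove_lt_iff_castSucc_lt p j
  congr! 2 <;> ext j
  · exact hlt j
  · exact not_lt.symm.trans ((hlt j).not.trans not_lt)

theorem IsUnshuffle.eq_zero_or_eq_of_apply_eq_zero {m : ℕ} {σ : Perm (Fin (n + 1))}
    (hσ : IsUnshuffle m σ) {i : Fin (n + 1)} (hi : σ i = 0) : i = 0 ∨ (i : ℕ) = m := by
  by_contra! h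
  have hi0 := Fin.val_ne_zero_iff.2 h.1
  set j : Fin (n + 1) := ⟨(i : ℕ) - 1, by omega⟩
  have hji : j < i := Fin.lt_def.2 (by simp only [j]; omega)
  have : σ j < σ i := by
    rcases lt_or_ge (i : ℕ) m with him | him
    · exact hσ.1 (show (j : ℕ) < m by simp [j]; omega) him hji
    · exact hσ.2 (show m ≤ (j : ℕ) by simp [j]; omega) him hji
  exact Fin.not_lt_zero _ (hi ▸ this)

theorem IsUnshuffle.apply_zero_ne_zero_iff {p : Fin (n + 1)} (hp : p ≠ 0)
    {σ : Perm (Fin (n + 1))} (hσ : IsUnshuffle p σ) : σ 0 ≠ 0 ↔ σ p = 0 := by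
  refine ⟨fun h0 => ?_, fun hp0 h0 => hp (σ.injective (hp0.trans h0.symm))⟩
  obtain ⟨i, hi0⟩ := σ.surjective 0
  rcases hσ.eq_zero_or_eq_of_apply_eq_zero hi0 with rfl | hi
  · exact absurd hi0 h0
  · rwa [← Fin.ext hi]

theorem unshuffleSign_insertZero_zero (m : ℕ) (e : Perm (Fin n)) :
    unshuffleSign m (insertZero 0 e) = unshuffleSign (m - 1) e := by
  simp [unshuffleSign, isUnshuffle_insertZero_zero, sign_insertZero]

theorem unshuffleSign_insertZero_self (p : Fin (n + 1)) (e : Perm (Fin n)) :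
    unshuffleSign p (insertZero p e) = (-1) ^ (p : ℕ) * unshuffleSign p e := by
  simp [unshuffleSign, isUnshuffle_insertZero_self, sign_insertZero]

theorem sum_unshuffleSign_apply_zero_ne_zero {p : Fin (n + 1)} (hp : p ≠ 0) :
    ∑ σ : Perm (Fin (n + 1)) with ¬σ 0 = 0, unshuffleSign p σ =
      ∑ σ with σ p = 0, unshuffleSign p σ := by
  rw [sum_filter, sum_filter]
  refine sum_congr rfl fun σ _ => ?_
  by_cases hσ : IsUnshuffle p σ
  · exact if_congr (hσ.apply_zero_ne_zero_iff hp) rfl rfl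
  · simp [unshuffleSign, hσ]

theorem unshuffleSignSum_succ {p : Fin (n + 1)} (hp : p ≠ 0) :
    unshuffleSignSum (n + 1) p =
      unshuffleSignSum n (p - 1) + (-1) ^ (p : ℕ) * unshuffleSignSum n p := by
  rw [unshuffleSignSum_eq_sum_unshuffleSign, ← sum_filter_add_sum_filter_not univ (· 0 = 0),
    sum_unshuffleSign_apply_zero_ne_zero hp, sum_filter_apply_eq_zero, sum_filter_apply_eq_zero]
  simp only [unshuffleSign_insertZero_zero, unshuffleSign_insertZero_self, ← mul_sum,
    unshuffleSignSum_eq_sum_unshuffleSign]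

def gaussBinomNegOne (n m : ℕ) : ℤ := if Even n ∧ Odd m then 0 else (n / 2).choose (m / 2)

section
variable (a b : ℕ)

@[simp]
theorem gaussBinomNegOne_two_mul_two_mul : gaussBinomNegOne (2 * a) (2 * b) = a.choose b := by
  simp [gaussBinomNegOne]

@[simp]
theorem gaussBinomNegOne_two_mul_two_mul_add_one : gaussBinomNegOne (2 * a) (2 * b + 1) = 0 := by
  simp [gaussBinomNegOne]

@[simp]
theorem gaussBinomNegOne_two_mul_add_one_two_mul :
    gaussBinomNegOne (2 * a + 1) (2 * b) = a.choose b := by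
  simp [gaussBinomNegOne, Nat.mul_add_div]

@[simp]
theorem gaussBinomNegOne_two_mul_add_one_two_mul_add_one :
    gaussBinomNegOne (2 * a + 1) (2 * b + 1) = a.choose b := by
  simp [gaussBinomNegOne, Nat.mul_add_div]

end

theorem gaussBinomNegOne_succ {n m : ℕ} (hm : 0 < m) :
    gaussBinomNegOne (n + 1) m =
      gaussBinomNegOne n (m - 1) + (-1) ^ m * gaussBinomNegOne n m := by
  obtain ⟨a, rfl | rfl⟩ := Nat.even_or_odd' n <;>
    obtain ⟨b, rfl | rfl⟩ := Nat.even_or_odd' m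
  · obtain ⟨b, rfl⟩ := Nat.exists_eq_succ_of_ne_zero (by omega : b ≠ 0)
    simp [show 2 * (b + 1) - 1 = 2 * b + 1 by omega]
  · simp
  · obtain ⟨b, rfl⟩ := Nat.exists_eq_succ_of_ne_zero (by omega : b ≠ 0)
    simp [show 2 * (b + 1) - 1 = 2 * b + 1 by omega, show 2 * a + 1 + 1 = 2 * (a + 1) by ring,
      Nat.choose_succ_succ]
  · simp [show 2 * a + 1 + 1 = 2 * (a + 1) by ring, pow_succ]

theorem gaussBinomNegOne_zero_right (n : ℕ) : gaussBinomNegOne n 0 = 1 := by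
  simp [gaussBinomNegOne]

theorem gaussBinomNegOne_self (n : ℕ) : gaussBinomNegOne n n = 1 := by
  simp [gaussBinomNegOne, Nat.not_odd_iff_even]

theorem unshuffleSignSum_eq_gaussBinomNegOne {n m : ℕ} (hmn : m ≤ n) :
    unshuffleSignSum n m = gaussBinomNegOne n m := by
  induction n generalizing m with
  | zero =>
    rw [Nat.le_zero.1 hmn, unshuffleSignSum_eq_one (Or.inl rfl), gaussBinomNegOne_zero_right]
  | succ n ih =>
    rcases Nat.eq_zero_or_pos m with rfl | hm
    · rw [unshuffleSignSum_eq_one (Or.inl rfl), gaussBinomNegOne_zero_right]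
    rcases hmn.eq_or_lt with rfl | hmn
    · rw [unshuffleSignSum_eq_one (Or.inr le_rfl), gaussBinomNegOne_self]
    have hp : (⟨m, hmn⟩ : Fin (n + 1)) ≠ 0 := Fin.ne_of_val_ne hm.ne'
    rw [unshuffleSignSum_succ hp, gaussBinomNegOne_succ hm, ih (by omega), ih (by omega)]

end Unshuffle

/-- `C(k, j)` for `k = 2p`, `j = 2q + 1`: the signed count equals `C(p-1, q)`. -/
theorem unshuffle_count_even_odd (p q : ℕ) (h : q < p) :
    unshuffleSignSum (2 * p - 1) (2 * p - (2 * q + 1)) = ((p - 1).choose q : ℤ) := by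
  rw [Unshuffle.unshuffleSignSum_eq_gaussBinomNegOne (by omega),
    show 2 * p - 1 = 2 * (p - 1) + 1 by omega,
    show 2 * p - (2 * q + 1) = 2 * (p - 1 - q) + 1 by omega,
    Unshuffle.gaussBinomNegOne_two_mul_add_one_two_mul_add_one, Nat.choose_symm (by omega)]
end

section
/- Let C(k,j) denote the sum of signs over all (k−j, j−1)-unshuffles in S_{k−1}. Then for integers p ≥ q ≥ 0, one has C(2p+1, 2q+1) = binomial(p, q). -/
/-!
Write `S(n, m)` for `unshuffleSignSum n m`. In an unshuffle of `Fin (n + 1)` with blocks of sizes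
`m + 1` and `n - m`, the value `0` is the image of the first position of a block, `0` or `m + 1`;
deleting it leaves an unshuffle of `Fin n` with blocks `(m, n - m)`, resp. `(m + 1, n - m - 1)`,
and deleting it from position `k` changes the sign by `(-1) ^ k`. Hence
`S(n + 1, m + 1) = S(n, m) + (-1) ^ (m + 1) S(n, m + 1)`; applying this twice, the middle terms
cancel and `S(n + 2, m + 2) = S(n, m) + S(n, m + 2)`. This is Pascal's rule, so with
`S(n, 0) = S(n, n) = 1` we get `S(2p, 2r) = C(p, r)`.
-/

open scoped Classical

open Equiv Equiv.Perm

def IsUnshuffle {n : ℕ} (m : ℕ) (σ : Perm (Fin n)) : Prop :=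
  StrictMonoOn σ {i | (i : ℕ) < m} ∧ StrictMonoOn σ {i | m ≤ (i : ℕ)}

lemma unshuffleSignSum_eq_sum_isUnshuffle (n m : ℕ) :
    unshuffleSignSum n m =
      ∑ σ : Perm (Fin n), if IsUnshuffle m σ then (sign σ : ℤ) else 0 := by
  refine Finset.sum_congr rfl fun σ _ => if_congr (and_congr ?_ ?_) rfl rfl
  · exact ⟨fun h a _ b hb hab => h a b hab hb,
      fun h i j hij hj => h (lt_trans (Fin.lt_def.mp hij) hj) hj hij⟩
  · exact ⟨fun h a ha b _ hab => h a b hab ha,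
      fun h i j hij hi => h hi (le_trans hi (Fin.le_def.mp hij.le)) hij⟩

lemma isUnshuffle_iff_eq_one {n m : ℕ} (hm : m = 0 ∨ n ≤ m) {σ : Perm (Fin n)} :
    IsUnshuffle m σ ↔ σ = 1 := by
  refine ⟨fun ⟨h₁, h₂⟩ => ?_, ?_⟩
  · have hσ : StrictMono σ := by
      rcases hm with rfl | hnm
      · exact strictMonoOn_univ.mp (by simpa using h₂)
      · exact strictMonoOn_univ.mp (h₁.mono fun i _ => i.2.trans_le hnm)
    ext i
    simp [hσ.apply_eq]
  · rintro rfl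
    exact ⟨strictMono_id.strictMonoOn _, strictMono_id.strictMonoOn _⟩

lemma unshuffleSignSum_eq_one {n m : ℕ} (hm : m = 0 ∨ n ≤ m) : unshuffleSignSum n m = 1 := by
  simp [unshuffleSignSum_eq_sum_isUnshuffle, isUnshuffle_iff_eq_one hm]

lemma Fin.val_succAbove {n : ℕ} (k : Fin (n + 1)) (j : Fin n) :
    (k.succAbove j : ℕ) = if (j : ℕ) < k then (j : ℕ) else j + 1 := by
  simp only [Fin.succAbove, Fin.lt_def, Fin.val_castSucc]
  split_ifs <;> rfl

/-- The permutation with value `0` at position `k` and the values `τ j + 1`, in the order given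
by `τ`, at the other positions. -/
def insertZeroAt {n : ℕ} (k : Fin (n + 1)) (τ : Perm (Fin n)) : Perm (Fin (n + 1)) :=
  decomposeFin.symm (0, τ) * k.cycleRange

section insertZeroAt

variable {n : ℕ} (k : Fin (n + 1)) (τ : Perm (Fin n))

@[simp]
lemma insertZeroAt_apply_self : insertZeroAt k τ k = 0 := by
  simp [insertZeroAt]

@[simp]
lemma insertZeroAt_apply_succAbove (j : Fin n) :
    insertZeroAt k τ (k.succAbove j) = (τ j).succ := by
  simp [insertZeroAt]

lemma sign_insertZeroAt : sign (insertZeroAt k τ) = (-1) ^ (k : ℕ) * sign τ := by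
  simp [insertZeroAt, Fin.sign_cycleRange, mul_comm]

lemma insertZeroAt_bijective :
    Function.Bijective fun x : Fin (n + 1) × Perm (Fin n) => insertZeroAt x.1 x.2 := by
  refine (Fintype.bijective_iff_injective_and_card _).mpr
    ⟨?_, by simp [Fintype.card_perm, Nat.factorial_succ]⟩
  rintro ⟨k, τ⟩ ⟨k', τ'⟩ h
  dsimp only at h
  obtain rfl : k = k' := (insertZeroAt k' τ').injective <| by
    rw [insertZeroAt_apply_self, ← h, insertZeroAt_apply_self]
  refine Prod.ext rfl (Equiv.ext fun j => Fin.succ_injective _ ?_)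
  simpa using congr($h (k.succAbove j))

lemma strictMonoOn_insertZeroAt_iff {S : Set (Fin (n + 1))} :
    StrictMonoOn (insertZeroAt k τ) S ↔
      StrictMonoOn τ (k.succAbove ⁻¹' S) ∧ (k ∈ S → ∀ i ∈ S, k ≤ i) := by
  refine ⟨fun h => ⟨fun a ha b hb hab => ?_, fun hk i hi => not_lt.mp fun hik => ?_⟩, ?_⟩
  · simpa using h ha hb (Fin.strictMono_succAbove k hab)
  · simpa using h hi hk hik
  · rintro ⟨hτ, hmin⟩ a ha b hb hab
    have hbk : b ≠ k := by rintro rfl; exact (hmin hb a ha).not_gt hab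
    obtain ⟨b, rfl⟩ := Fin.exists_succAbove_eq hbk
    rcases eq_or_ne a k with rfl | hak
    · simp [Fin.succ_pos]
    · obtain ⟨a, rfl⟩ := Fin.exists_succAbove_eq hak
      simpa using hτ ha hb (Fin.succAbove_lt_succAbove_iff.mp hab)

variable {m : ℕ}

lemma isUnshuffle_succ_insertZeroAt_zero :
    IsUnshuffle (m + 1) (insertZeroAt 0 τ) ↔ IsUnshuffle m τ := by
  simp [IsUnshuffle, strictMonoOn_insertZeroAt_iff]

lemma isUnshuffle_succ_insertZeroAt_succ (hm : m + 1 < n + 1) :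
    IsUnshuffle (m + 1) (insertZeroAt ⟨m + 1, hm⟩ τ) ↔ IsUnshuffle (m + 1) τ := by
  have h₁ : Fin.succAbove ⟨m + 1, hm⟩ ⁻¹' {i | (i : ℕ) < m + 1} =
      {j : Fin n | (j : ℕ) < m + 1} := by
    ext j; simp only [Set.mem_preimage, Set.mem_ofPred_eq, Fin.val_succAbove]; split_ifs <;> omega
  have h₂ : Fin.succAbove ⟨m + 1, hm⟩ ⁻¹' {i | m + 1 ≤ (i : ℕ)} =
      {j : Fin n | m + 1 ≤ (j : ℕ)} := by
    ext j; simp only [Set.mem_preimage, Set.mem_ofPred_eq, Fin.val_succAbove]; split_ifs <;> omega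
  simp only [IsUnshuffle, strictMonoOn_insertZeroAt_iff, h₁, h₂]
  simp [Fin.le_def]

lemma not_isUnshuffle_succ_insertZeroAt (hm : m < n) (hk₀ : k ≠ 0) (hk : (k : ℕ) ≠ m + 1) :
    ¬ IsUnshuffle (m + 1) (insertZeroAt k τ) := by
  rintro ⟨h₁, h₂⟩
  rcases lt_or_gt_of_ne hk with hlt | hgt
  · exact hk₀ <| Fin.le_zero_iff.mp <|
      (strictMonoOn_insertZeroAt_iff k τ).mp h₁ |>.2 hlt 0 (by simp)
  · have hk_le :=
      (strictMonoOn_insertZeroAt_iff k τ).mp h₂ |>.2 hgt.le ⟨m + 1, by omega⟩ (by simp)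
    exact absurd (Fin.le_def.mp hk_le) (by simpa using hgt)

end insertZeroAt

lemma unshuffleSignSum_succ_succ {n m : ℕ} (hm : m < n) :
    unshuffleSignSum (n + 1) (m + 1) =
      unshuffleSignSum n m + (-1) ^ (m + 1) * unshuffleSignSum n (m + 1) := by
  simp only [unshuffleSignSum_eq_sum_isUnshuffle]
  rw [← Fintype.sum_bijective _ insertZeroAt_bijective _ _ fun _ => rfl, Fintype.sum_prod_type,
    Fintype.sum_eq_add 0 ⟨m + 1, by omega⟩ (by simp [Fin.ext_iff])]
  · simp [isUnshuffle_succ_insertZeroAt_zero, isUnshuffle_succ_insertZeroAt_succ,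
      sign_insertZeroAt, Finset.mul_sum]
  · rintro k ⟨hk₀, hk⟩
    simp [not_isUnshuffle_succ_insertZeroAt k _ hm hk₀ (by simpa [Fin.ext_iff] using hk)]

lemma unshuffleSignSum_add_two {n m : ℕ} (hm : m + 2 ≤ n) :
    unshuffleSignSum (n + 2) (m + 2) = unshuffleSignSum n m + unshuffleSignSum n (m + 2) := by
  rw [unshuffleSignSum_succ_succ (n := n + 1) (m := m + 1) (by omega),
    unshuffleSignSum_succ_succ (by omega), unshuffleSignSum_succ_succ (by omega)]
  have hsq : ((-1 : ℤ) ^ m) ^ 2 = 1 := by rw [← pow_mul, pow_mul', neg_one_sq, one_pow]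
  linear_combination unshuffleSignSum n (m + 2) * hsq

lemma unshuffleSignSum_two_mul {p r : ℕ} (h : r ≤ p) :
    unshuffleSignSum (2 * p) (2 * r) = p.choose r := by
  induction p generalizing r with
  | zero =>
    obtain rfl : r = 0 := by omega
    simp [unshuffleSignSum_eq_one]
  | succ p ih =>
    rcases r with _ | r
    · simp [unshuffleSignSum_eq_one]
    rcases (Nat.le_of_lt_succ h).eq_or_lt with rfl | hr
    · simp [unshuffleSignSum_eq_one]
    rw [Nat.choose_succ_succ', mul_add_one, mul_add_one, unshuffleSignSum_add_two (by omega),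
      ih hr.le, ← mul_add_one, ih (r := r + 1) hr]
    push_cast
    ring

/-- `C(k, j)` for `k = 2p + 1`, `j = 2q + 1`: the signed count equals `C(p, q)`. -/
theorem unshuffle_count_odd_odd (p q : ℕ) (h : q ≤ p) :
    unshuffleSignSum (2 * p) (2 * p - 2 * q) = (p.choose q : ℤ) := by
  rw [← Nat.mul_sub, unshuffleSignSum_two_mul (Nat.sub_le p q), Nat.choose_symm h]
end
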